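/- arXiv:1307.4261 — 5 statements merged into one kernel-verified Lean document; each statement's English description precedes it below -/
import Mathlib

section
/- Let R be a commutative ring and f : X → Y a homomorphism of R-modules with finite kernel and finite cokernel. For any r ∈ R, the induced map f_{/r} : X/rX → Y/rY satisfies #Ker(f_{/r}) ≤ #Ker(f) · #Coker(f) and #Coker(f_{/r}) ≤ #Coker(f). -/
/-!
Write `rX` for the multiples of `r`. Factor `f_{/r}` through `Φ : X/rX → Y/r·f(X)` induced by `f`.
Its kernel is the image of `ker f`, because `f x = r f x'` means `x - r x' ∈ ker f`, and
`ker f_{/r}` is the preimage under `Φ` of `rY/r·f(X)`, which is the image of `Y/f(X)` under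
multiplication by `r`. The cokernel of `f_{/r}` is `Y/(rY + f(X))`, a quotient of `Y/f(X)`.
-/

open LinearMap

namespace Submodule

variable {R M N : Type*} [Ring R] [AddCommGroup M] [Module R M] [AddCommGroup N] [Module R N]

theorem card_map_le (g : M →ₗ[R] N) (p : Submodule R M) [Finite p] :
    Nat.card (p.map g) ≤ Nat.card p :=
  Nat.card_le_card_of_surjective _ (g.submoduleMap_surjective p)

theorem card_comap_le (g : M →ₗ[R] N) (S : Submodule R N) [Finite S] :
    Nat.card (S.comap g) ≤ Nat.card (ker g) * Nat.card S := by
  set T := S.comap g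
  have hker : ker g ≤ T := fun x hx => by simp [T, mem_ker.mp hx]
  let gT := g.restrict (p := T) (q := S) fun _ hx => hx
  have hkergT : Nat.card (ker gT) = Nat.card (ker g) := by
    rw [ker_restrict]
    exact Nat.card_congr (comapSubtypeEquivOfLe hker).toEquiv
  calc Nat.card T = Nat.card (ker gT) * Nat.card (T ⧸ ker gT) := card_eq_card_quotient_mul_card _
    _ = Nat.card (ker g) * Nat.card (range gT) := by
      rw [hkergT, Nat.card_congr gT.quotKerEquivRange.toEquiv]
    _ ≤ Nat.card (ker g) * Nat.card S := by
      gcongr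
      exact Finite.card_subtype_le _

theorem card_quotient_range_mapQ_le {p : Submodule R M} {q : Submodule R N} (f : M →ₗ[R] N)
    (h : p ≤ q.comap f) [Finite (N ⧸ range f)] :
    Nat.card ((N ⧸ q) ⧸ range (p.mapQ q f h)) ≤ Nat.card (N ⧸ range f) := by
  rw [range_mapQ, Nat.card_congr (quotientQuotientEquivQuotientSup q (range f)).toEquiv]
  exact Nat.card_le_card_of_surjective _ (factor_surjective le_sup_right)

end Submodule

section

open Submodule

variable {R X Y : Type*} [CommRing R] [AddCommGroup X] [Module R X] [AddCommGroup Y] [Module R Y]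

theorem LinearMap.comap_range_smul (f : X →ₗ[R] Y) (r : R) :
    (range (r • f)).comap f = range (r • LinearMap.id) ⊔ ker f := by
  ext x
  simp only [mem_comap, mem_range, smul_apply, id_coe, id_eq, mem_sup, mem_ker]
  constructor
  · rintro ⟨x', hx'⟩
    exact ⟨r • x', ⟨x', rfl⟩, x - r • x', by simp [map_smul, hx'], by abel⟩
  · rintro ⟨_, ⟨x', rfl⟩, k, hk, rfl⟩
    exact ⟨x', by simp [hk]⟩

theorem LinearMap.card_ker_mapQ_smul_le (f : X →ₗ[R] Y) (r : R) [Finite (ker f)]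
    [Finite (Y ⧸ range f)]
    (h : range (r • LinearMap.id : X →ₗ[R] X) ≤ (range (r • LinearMap.id : Y →ₗ[R] Y)).comap f) :
    Nat.card (ker ((range (r • LinearMap.id : X →ₗ[R] X)).mapQ
      (range (r • LinearMap.id : Y →ₗ[R] Y)) f h)) ≤
      Nat.card (ker f) * Nat.card (Y ⧸ range f) := by
  let Φ := (range (r • LinearMap.id : X →ₗ[R] X)).mapQ (range (r • f)) f (by
    rintro _ ⟨x, rfl⟩
    exact ⟨x, by simp⟩)
  let ψ := (range f).mapQ (range (r • f)) (r • LinearMap.id) (by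
    rintro _ ⟨x, rfl⟩
    exact ⟨x, by simp⟩)
  have hΦ : ker Φ = (ker f).map (mkQ _) := by
    rw [ker_mapQ, comap_range_smul, Submodule.map_sup, mkQ_map_self, bot_sup_eq]
  have hfactor : (range (r • LinearMap.id : X →ₗ[R] X)).mapQ _ f h =
      factor (p := range (r • f)) (by rintro _ ⟨x, rfl⟩; exact ⟨f x, by simp⟩) ∘ₗ Φ := by
    ext; rfl
  have hker : ker ((range (r • LinearMap.id : X →ₗ[R] X)).mapQ _ f h) = (range ψ).comap Φ := by
    rw [hfactor, ker_comp, ker_mapQ, range_mapQ, comap_id]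
  have : Finite (range ψ) := Finite.of_surjective _ ψ.surjective_rangeRestrict
  calc _ = Nat.card ((range ψ).comap Φ) := by rw [hker]
    _ ≤ Nat.card (ker Φ) * Nat.card (range ψ) := card_comap_le Φ _
    _ ≤ Nat.card (ker f) * Nat.card (Y ⧸ range f) := by
      gcongr
      · rw [hΦ]
        exact card_map_le _ _
      · exact Nat.card_le_card_of_surjective _ ψ.surjective_rangeRestrict

end

/-- Let `R` be a commutative ring and `f : X → Y` a homomorphism of
`R`-modules with finite kernel and finite cokernel.  For any `r ∈ R`, the induced map
`f_{/r} : X/rX → Y/rY` satisfies `#Ker(f_{/r}) ≤ #Ker(f) · #Coker(f)` and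
`#Coker(f_{/r}) ≤ #Coker(f)`. -/
theorem stmt0 {R X Y : Type*} [CommRing R] [AddCommGroup X] [Module R X]
    [AddCommGroup Y] [Module R Y] (f : X →ₗ[R] Y)
    (hker : Finite (LinearMap.ker f)) (hcoker : Finite (Y ⧸ LinearMap.range f)) (r : R)
    (fr : (X ⧸ LinearMap.range (r • (LinearMap.id : X →ₗ[R] X))) →ₗ[R]
      (Y ⧸ LinearMap.range (r • (LinearMap.id : Y →ₗ[R] Y))))
    (hfr : fr = Submodule.mapQ _ _ f (by
      rintro _ ⟨x, rfl⟩
      exact ⟨f x, by simp⟩)) :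
    Nat.card (LinearMap.ker fr) ≤
      Nat.card (LinearMap.ker f) * Nat.card (Y ⧸ LinearMap.range f) ∧
    Nat.card ((Y ⧸ LinearMap.range (r • (LinearMap.id : Y →ₗ[R] Y))) ⧸ LinearMap.range fr) ≤
      Nat.card (Y ⧸ LinearMap.range f) := by
  subst hfr
  exact ⟨f.card_ker_mapQ_smul_le r _, Submodule.card_quotient_range_mapQ_le f _⟩
end

section
/- Let R be a commutative ring and f : X → Y a homomorphism of R-modules with finite kernel and finite cokernel. For any r ∈ R, the induced map f_{[r]} : X[r] → Y[r] on r-torsion submodules satisfies #Ker(f_{[r]}) ≤ #Ker(f) and #Coker(f_{[r]}) ≤ #Ker(f) · #Coker(f). -/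
/-!
The kernel bound holds because `Ker f_{[r]} ⊆ Ker f`. For the cokernel, the natural map
`g : Coker f_{[r]} → Coker f` has `#Coker f_{[r]} = #Ker g · #Im g` and `#Im g ≤ #Coker f`.
An element of `Ker g` is the class of some `f x ∈ Y[r]`; sending `x` to `r • x ∈ Ker f` is
linear on `f⁻¹(Y[r])`, and its kernel `X[r]` maps into `Im f_{[r]}`, so `Ker g` is a quotient
of a submodule of `Ker f`. This is the connecting map of the snake lemma for multiplication by `r`.
-/

open Submodule

namespace LinearMap

section Ring

variable {R M N : Type*} [Ring R] [AddCommGroup M] [Module R M] [AddCommGroup N] [Module R N]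

theorem card_eq_card_ker_mul_card_range (f : M →ₗ[R] N) :
    Nat.card M = Nat.card (ker f) * Nat.card (range f) := by
  rw [(ker f).card_eq_card_quotient_mul_card, Nat.card_congr f.quotKerEquivRange.toEquiv]

theorem card_range_le_card_range_of_ker_le {P : Type*} [AddCommGroup P] [Module R P]
    (φ : P →ₗ[R] M) (ψ : P →ₗ[R] N) [Finite (range φ)] (h : ker φ ≤ ker ψ) :
    Nat.card (range ψ) ≤ Nat.card (range φ) := by
  have : Finite (P ⧸ ker φ) := .of_equiv _ φ.quotKerEquivRange.symm.toEquiv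
  rw [← range_liftQ (ker φ) ψ h, ← Nat.card_congr φ.quotKerEquivRange.toEquiv]
  exact Nat.card_le_card_of_surjective _ (surjective_rangeRestrict _)

variable {p : Submodule R M} {q : Submodule R N}

theorem card_ker_restrict_le (f : M →ₗ[R] N) (hf : ∀ x ∈ p, f x ∈ q) [Finite (ker f)] :
    Nat.card (ker (f.restrict hf)) ≤ Nat.card (ker f) := by
  rw [ker_restrict]
  exact Nat.card_le_card_of_injective (fun z => ⟨z.1.1, z.2⟩)
    fun a b h => Subtype.ext (Subtype.ext (Subtype.mk.inj h))

def cokerRestrictToCoker (f : M →ₗ[R] N) (hf : ∀ x ∈ p, f x ∈ q) :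
    (q ⧸ range (f.restrict hf)) →ₗ[R] N ⧸ range f :=
  (range (f.restrict hf)).mapQ (range f) q.subtype <| by
    rintro _ ⟨x, rfl⟩
    exact ⟨x, rfl⟩

@[simp]
theorem cokerRestrictToCoker_mk (f : M →ₗ[R] N) (hf : ∀ x ∈ p, f x ∈ q) (y : q) :
    f.cokerRestrictToCoker hf (Submodule.Quotient.mk y) = Submodule.Quotient.mk (y : N) :=
  rfl

theorem card_coker_restrict_le (f : M →ₗ[R] N) (hf : ∀ x ∈ p, f x ∈ q)
    [Finite (N ⧸ range f)] :
    Nat.card (q ⧸ range (f.restrict hf)) ≤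
      Nat.card (ker (f.cokerRestrictToCoker hf)) * Nat.card (N ⧸ range f) := by
  rw [card_eq_card_ker_mul_card_range (f.cokerRestrictToCoker hf)]
  exact Nat.mul_le_mul_left _ (Nat.card_le_card_of_injective _ Subtype.val_injective)

end Ring

section Torsion

variable {R M N : Type*} [CommRing R] [AddCommGroup M] [Module R M] [AddCommGroup N] [Module R N]

theorem map_torsionBy (f : M →ₗ[R] N) (r : R) :
    ∀ x ∈ torsionBy R M r, f x ∈ torsionBy R N r := by
  intro x hx
  rw [mem_torsionBy_iff] at hx ⊢
  rw [← map_smul, hx, map_zero]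

theorem card_ker_cokerRestrictToCoker_torsionBy_le (f : M →ₗ[R] N) (r : R) [Finite (ker f)] :
    Nat.card (ker (f.cokerRestrictToCoker (f.map_torsionBy r))) ≤ Nat.card (ker f) := by
  let P := (torsionBy R N r).comap f
  let φ : P →ₗ[R] M := r • P.subtype
  let ψ := (range (f.restrict (f.map_torsionBy r))).mkQ ∘ₗ f.restrict (p := P) fun _ hx => hx
  have hφ : range φ ≤ ker f := by
    rintro _ ⟨x, rfl⟩
    rw [mem_ker, coe_smul, Pi.smul_apply, subtype_apply, map_smul]
    exact (mem_torsionBy_iff _ _).mp x.2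
  have : Finite (range φ) := Finite.of_injective _ (inclusion_injective hφ)
  have hker : ker φ ≤ ker ψ := by
    intro x hx
    rw [mem_ker, comp_apply, mkQ_apply, Quotient.mk_eq_zero]
    exact ⟨⟨x, hx⟩, rfl⟩
  have hrange : ker (f.cokerRestrictToCoker (f.map_torsionBy r)) = range ψ := by
    refine le_antisymm (fun c hc => ?_) ?_
    · obtain ⟨y, rfl⟩ := Submodule.Quotient.mk_surjective _ c
      obtain ⟨x, hx⟩ := (Quotient.mk_eq_zero _).mp hc
      exact ⟨⟨x, show f x ∈ torsionBy R N r from hx ▸ y.2⟩,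
        congrArg (Submodule.Quotient.mk ·) (Subtype.ext hx)⟩
    · rintro _ ⟨x, rfl⟩
      rw [mem_ker, comp_apply, mkQ_apply, cokerRestrictToCoker_mk, Quotient.mk_eq_zero]
      exact ⟨x, rfl⟩
  calc Nat.card (ker (f.cokerRestrictToCoker (f.map_torsionBy r)))
      = Nat.card (range ψ) := by rw [hrange]
    _ ≤ Nat.card (range φ) := card_range_le_card_range_of_ker_le φ ψ hker
    _ ≤ Nat.card (ker f) := Nat.card_le_card_of_injective _ (inclusion_injective hφ)

end Torsion

end LinearMap

/-- Let `R` be a commutative ring and `f : X → Y` a homomorphism of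
`R`-modules with finite kernel and finite cokernel.  For any `r ∈ R`, the induced map
`f_{[r]} : X[r] → Y[r]` on `r`-torsion submodules satisfies `#Ker(f_{[r]}) ≤ #Ker(f)` and
`#Coker(f_{[r]}) ≤ #Ker(f) · #Coker(f)`. -/
theorem stmt1 {R X Y : Type*} [CommRing R] [AddCommGroup X] [Module R X]
    [AddCommGroup Y] [Module R Y] (f : X →ₗ[R] Y)
    (hker : Finite (LinearMap.ker f)) (hcoker : Finite (Y ⧸ LinearMap.range f)) (r : R)
    (frt : (LinearMap.ker (r • (LinearMap.id : X →ₗ[R] X))) →ₗ[R]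
      (LinearMap.ker (r • (LinearMap.id : Y →ₗ[R] Y))))
    (hfrt : frt = f.restrict (p := LinearMap.ker (r • (LinearMap.id : X →ₗ[R] X)))
      (q := LinearMap.ker (r • (LinearMap.id : Y →ₗ[R] Y))) (by
        intro x hx
        simp only [LinearMap.mem_ker, LinearMap.smul_apply, LinearMap.id_coe, id_eq] at hx ⊢
        rw [← map_smul, hx, map_zero])) :
    Nat.card (LinearMap.ker frt) ≤ Nat.card (LinearMap.ker f) ∧
    Nat.card ((LinearMap.ker (r • (LinearMap.id : Y →ₗ[R] Y))) ⧸ LinearMap.range frt) ≤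
      Nat.card (LinearMap.ker f) * Nat.card (Y ⧸ LinearMap.range f) := by
  subst hfrt
  exact ⟨f.card_ker_restrict_le (f.map_torsionBy r),
    (f.card_coker_restrict_le (f.map_torsionBy r)).trans
      (Nat.mul_le_mul_right _ (f.card_ker_cokerRestrictToCoker_torsionBy_le r))⟩
end

section
/- Let A be an abelian group containing a finite-index subgroup isomorphic to Z_l^n (the n-th power of the l-adic integers) for a prime l and n ≥ 0. Then for every m ≥ 1, the quotient A/l^m A and the torsion subgroup A[l^m] are finite, and #(A/l^m A) = l^{m n} · #A[l^m]. -/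
/-!
Let `f` be multiplication by `l ^ m`. Since `H ≅ ℤ_l^n` is torsion-free, `H ∩ ker f = 0`, so
`ker f` embeds in the finite group `A / H`; and `[H : f H] = l ^ (m n)` because
`ℤ_l / l^m ℤ_l ≅ ℤ / l^m`. Computing the index of `f H` in `A` once through `f A ≅ A / ker f`
and once through `H ≤ H + ker f` gives
`[A : f A] · [A : H + ker f] = [A : H + ker f] · |ker f| · [H : f H]`,
and the common finite factor cancels.
-/

namespace Subgroup

variable {G : Type*} [Group G] {H K : Subgroup G}

@[to_additive]
theorem relIndex_eq_card_of_disjoint (h : Disjoint H K) : H.relIndex K = Nat.card K := by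
  rw [← inf_relIndex_right, h.eq_bot, relIndex_bot_left]

@[to_additive]
theorem finite_of_disjoint [H.FiniteIndex] (h : Disjoint H K) : Finite K :=
  Nat.finite_of_card_ne_zero <| relIndex_eq_card_of_disjoint h ▸ FiniteIndex.index_ne_zero

@[to_additive index_range_eq_relIndex_map_mul_card_ker]
theorem index_range_eq_relIndex_map_mul_card_ker [H.Normal] [H.FiniteIndex] {f : G →* G}
    (hfH : H.map f ≤ H) (hdisj : Disjoint H f.ker) :
    f.range.index = (H.map f).relIndex H * Nat.card f.ker := by
  have hJ : Nat.card f.ker * (H ⊔ f.ker).index = H.index := by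
    rw [← relIndex_eq_card_of_disjoint hdisj, ← relIndex_sup_left, relIndex_mul_index le_sup_left]
  have : (H ⊔ f.ker).FiniteIndex := finiteIndex_of_le le_sup_left
  apply mul_left_cancel₀ (H ⊔ f.ker).index_ne_zero_of_finite
  rw [← index_map, ← relIndex_mul_index hfH, ← hJ]
  ring

end Subgroup

namespace AddSubgroup

variable {M N : Type*} [AddCommGroup M] [AddCommGroup N]

theorem map_nsmul_le (H : AddSubgroup M) (k : ℕ) : H.map (nsmulAddMonoidHom k) ≤ H := by
  rintro _ ⟨x, hx, rfl⟩
  exact nsmul_mem hx k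

theorem relIndex_map_nsmul_eq_index_range (H : AddSubgroup M) (k : ℕ) :
    (H.map (nsmulAddMonoidHom k)).relIndex H = (nsmulAddMonoidHom (α := H) k).range.index := by
  rw [relIndex, addSubgroupOf_map_nsmulAddMonoidHom_eq_range]

theorem disjoint_ker_nsmul (H : AddSubgroup M) [IsAddTorsionFree H] {k : ℕ} (hk : k ≠ 0) :
    Disjoint H (nsmulAddMonoidHom (α := M) k).ker := by
  refine disjoint_def.mpr fun {x} hxH hxk ↦ ?_
  have : k • (⟨x, hxH⟩ : H) = k • 0 := Subtype.ext (hxk.trans (nsmul_zero k).symm)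
  exact congrArg Subtype.val (nsmul_right_injective hk this)

theorem _root_.AddEquiv.index_range_nsmul_eq (e : M ≃+ N) (k : ℕ) :
    (nsmulAddMonoidHom (α := M) k).range.index = (nsmulAddMonoidHom (α := N) k).range.index := by
  rw [← index_map_equiv _ e, e.map_range_nsmulAddMonoidHom]

theorem index_range_nsmul_pi (ι : Type*) [Fintype ι] (k : ℕ) :
    (nsmulAddMonoidHom (α := ι → M) k).range.index =
      (nsmulAddMonoidHom (α := M) k).range.index ^ Fintype.card ι := by
  rw [index_eq_card,
    Nat.card_congr (QuotientAddGroup.addEquivPiModRangeNSMulAddMonoidHom _ k).toEquiv, Nat.card_pi,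
    ← index_eq_card, Finset.prod_const, Finset.card_univ]

end AddSubgroup

namespace PadicInt

variable (p : ℕ) [Fact p.Prime]

theorem range_nsmul_pow_eq_ker_toZModPow (m : ℕ) :
    (nsmulAddMonoidHom (α := ℤ_[p]) (p ^ m)).range =
      (toZModPow (p := p) m).toAddMonoidHom.ker := by
  ext x
  change _ ↔ x ∈ RingHom.ker (toZModPow m)
  rw [ker_toZModPow, Ideal.mem_span_singleton, AddMonoidHom.mem_range]
  simp [dvd_iff_exists_eq_mul_left, nsmul_eq_mul, eq_comm, mul_comm]

theorem index_range_nsmul_pow (m : ℕ) :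
    (nsmulAddMonoidHom (α := ℤ_[p]) (p ^ m)).range.index = p ^ m := by
  rw [range_nsmul_pow_eq_ker_toZModPow, AddSubgroup.index_ker,
    AddMonoidHom.range_eq_top_of_surjective _ (ZMod.ringHom_surjective _), AddSubgroup.card_top,
    Nat.card_zmod]

end PadicInt

theorem stmt2_general {A : Type*} [AddCommGroup A] (l : ℕ) [Fact l.Prime] (n m : ℕ)
    (H : AddSubgroup A) (hfin : H.index ≠ 0) (e : H ≃+ (Fin n → ℤ_[l])) :
    Finite (A ⧸ (AddMonoidHom.range ((l ^ m : ℕ) • (AddMonoidHom.id A)))) ∧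
    Finite (AddMonoidHom.ker ((l ^ m : ℕ) • (AddMonoidHom.id A))) ∧
    Nat.card (A ⧸ (AddMonoidHom.range ((l ^ m : ℕ) • (AddMonoidHom.id A)))) =
      l ^ (m * n) * Nat.card (AddMonoidHom.ker ((l ^ m : ℕ) • (AddMonoidHom.id A))) := by
  rw [show (l ^ m : ℕ) • AddMonoidHom.id A = nsmulAddMonoidHom (l ^ m) from rfl,
    ← AddSubgroup.index_eq_card]
  have : H.FiniteIndex := ⟨hfin⟩
  have hl : l ≠ 0 := (Fact.out : l.Prime).ne_zero
  have : IsAddTorsionFree H := e.injective.isAddTorsionFree e.toAddMonoidHom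
  have hdisj := H.disjoint_ker_nsmul (pow_ne_zero m hl)
  have hrel : (H.map (nsmulAddMonoidHom (l ^ m))).relIndex H = l ^ (m * n) := by
    rw [H.relIndex_map_nsmul_eq_index_range, e.index_range_nsmul_eq,
      AddSubgroup.index_range_nsmul_pi, PadicInt.index_range_nsmul_pow, Fintype.card_fin, pow_mul]
  have hindex := AddSubgroup.index_range_eq_relIndex_map_mul_card_ker (H.map_nsmul_le _) hdisj
  have hker := AddSubgroup.finite_of_disjoint hdisj
  rw [hrel] at hindex
  have : (nsmulAddMonoidHom (α := A) (l ^ m)).range.FiniteIndex :=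
    ⟨hindex ▸ mul_ne_zero (pow_ne_zero _ hl) Nat.card_pos.ne'⟩
  exact ⟨inferInstance, hker, hindex⟩

/-- Let `A` be an abelian group containing a finite-index subgroup
isomorphic to `ℤ_l^n` for a prime `l` and `n ≥ 0`.  Then for every `m ≥ 1` the quotient
`A/l^m A` and the torsion subgroup `A[l^m]` are finite, and
`#(A/l^m A) = l^{m n} · #A[l^m]`. -/
theorem stmt2 {A : Type*} [AddCommGroup A] (l : ℕ) [Fact l.Prime] (n m : ℕ) (hm : 1 ≤ m)
    (H : AddSubgroup A) (hfin : H.index ≠ 0) (e : H ≃+ (Fin n → ℤ_[l])) :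
    Finite (A ⧸ (AddMonoidHom.range ((l ^ m : ℕ) • (AddMonoidHom.id A)))) ∧
    Finite (AddMonoidHom.ker ((l ^ m : ℕ) • (AddMonoidHom.id A))) ∧
    Nat.card (A ⧸ (AddMonoidHom.range ((l ^ m : ℕ) • (AddMonoidHom.id A)))) =
      l ^ (m * n) * Nat.card (AddMonoidHom.ker ((l ^ m : ℕ) • (AddMonoidHom.id A))) :=
  stmt2_general l n m H hfin e
end

section
/- Let 0 → A' → A → A'' → 0 be a short exact sequence of abelian groups in which the map A → A'' is surjective with kernel K that is uniquely divisible by l^m (i.e., multiplication by l^m is bijective on K). If A'' is finite, then #(A/l^m A) = #A[l^m]. -/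
/-!
Since `K = ker π` is uniquely `l^m`-divisible, the snake lemma for multiplication by `l^m` on
`0 → K → A → A'' → 0` shows that `π` induces isomorphisms `A[l^m] ≅ A''[l^m]` and
`A/l^m A ≅ A''/l^m A''`. On the finite group `A''` the kernel and cokernel of any endomorphism
have the same order.
-/

namespace AddMonoidHom

variable {A B : Type*} [AddCommGroup A] [AddCommGroup B] {π : A →+ B} {n : ℕ}

lemma eq_zero_of_nsmul_eq_zero_of_map_eq_zero
    (hdiv : Function.Injective (fun x : π.ker => n • x)) {a : A} (ha : π a = 0)
    (hna : n • a = 0) : a = 0 := by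
  have : n • (⟨a, ha⟩ : π.ker) = n • 0 := Subtype.ext (by simpa using hna)
  exact congrArg Subtype.val (hdiv this)

lemma ker_le_range_nsmul (hdiv : Function.Surjective (fun x : π.ker => n • x)) :
    π.ker ≤ (n • AddMonoidHom.id A).range := by
  intro a ha
  obtain ⟨k, hk⟩ := hdiv ⟨a, ha⟩
  exact ⟨k, congrArg Subtype.val hk⟩

lemma map_range_nsmul (hsurj : Function.Surjective π) :
    (n • AddMonoidHom.id A).range.map π = (n • AddMonoidHom.id B).range := by
  rw [map_range, show π.comp (n • AddMonoidHom.id A) = (n • AddMonoidHom.id B).comp π from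
    ext (map_nsmul π n), range_comp, range_eq_top.2 hsurj, ← range_eq_map]

lemma comap_range_nsmul (hsurj : Function.Surjective π)
    (hdiv : Function.Surjective (fun x : π.ker => n • x)) :
    (n • AddMonoidHom.id B).range.comap π = (n • AddMonoidHom.id A).range := by
  rw [← map_range_nsmul hsurj, AddSubgroup.comap_map_eq, sup_eq_left.2 (ker_le_range_nsmul hdiv)]

noncomputable def quotientRangeNsmulEquiv (hsurj : Function.Surjective π)
    (hdiv : Function.Surjective (fun x : π.ker => n • x)) :
    A ⧸ (n • AddMonoidHom.id A).range ≃+ B ⧸ (n • AddMonoidHom.id B).range :=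
  (QuotientAddGroup.quotientAddEquivOfEq (by
    rw [← comap_ker, QuotientAddGroup.ker_mk', comap_range_nsmul hsurj hdiv])).trans
    (QuotientAddGroup.quotientKerEquivOfSurjective ((QuotientAddGroup.mk' _).comp π)
      ((QuotientAddGroup.mk'_surjective _).comp hsurj))

def restrictKerNsmul (π : A →+ B) :
    (n • AddMonoidHom.id A).ker →+ (n • AddMonoidHom.id B).ker :=
  (π.domRestrict (n • AddMonoidHom.id A).ker).codRestrict (n • AddMonoidHom.id B).ker fun a ↦
    mem_ker.2 (by simpa [map_nsmul] using congrArg π (mem_ker.1 a.2))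

lemma bijective_restrictKerNsmul (hsurj : Function.Surjective π)
    (hdiv : Function.Bijective (fun x : π.ker => n • x)) :
    Function.Bijective (restrictKerNsmul (n := n) π) := by
  refine ⟨(injective_iff_map_eq_zero _).2 fun a ha ↦ Subtype.ext ?_, fun b ↦ ?_⟩
  · exact eq_zero_of_nsmul_eq_zero_of_map_eq_zero hdiv.1 (congrArg Subtype.val ha)
      (mem_ker.1 a.2)
  · obtain ⟨a, hab⟩ := hsurj b
    have hna : n • a ∈ π.ker := by
      simpa [map_nsmul, hab] using mem_ker.1 b.2
    obtain ⟨⟨k, hk⟩, hnk⟩ := hdiv.2 ⟨n • a, hna⟩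
    replace hnk : n • k = n • a := congrArg Subtype.val hnk
    refine ⟨⟨a - k, mem_ker.2 (by simp [smul_sub, hnk])⟩, Subtype.ext ?_⟩
    simp [restrictKerNsmul, mem_ker.1 hk, hab]

end AddMonoidHom

theorem stmt4_general {A A'' : Type*} [AddCommGroup A] [AddCommGroup A''] (l : ℕ)
    (m : ℕ) (π : A →+ A'') (hsurj : Function.Surjective π)
    (hdiv : Function.Bijective
      (fun x : AddMonoidHom.ker π => (l ^ m : ℕ) • x))
    (hfin : Finite A'') :
    Nat.card (A ⧸ (AddMonoidHom.range ((l ^ m : ℕ) • (AddMonoidHom.id A)))) =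
      Nat.card (AddMonoidHom.ker ((l ^ m : ℕ) • (AddMonoidHom.id A))) := by
  rw [Nat.card_congr (AddMonoidHom.quotientRangeNsmulEquiv hsurj hdiv.2).toEquiv,
    Nat.card_congr (Equiv.ofBijective _ (AddMonoidHom.bijective_restrictKerNsmul hsurj hdiv))]
  exact AddSubgroup.index_range

/-- Let `0 → K → A → A'' → 0` be a short exact sequence of abelian groups
in which `A → A''` is surjective with kernel `K` uniquely divisible by `l^m` (multiplication
by `l^m` is bijective on `K`).  If `A''` is finite, then `#(A/l^m A) = #A[l^m]`. -/
theorem stmt4 {A A'' : Type*} [AddCommGroup A] [AddCommGroup A''] (l : ℕ) [Fact l.Prime]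
    (m : ℕ) (hm : 1 ≤ m) (π : A →+ A'') (hsurj : Function.Surjective π)
    (hdiv : Function.Bijective
      (fun x : AddMonoidHom.ker π => (l ^ m : ℕ) • x))
    (hfin : Finite A'') :
    Nat.card (A ⧸ (AddMonoidHom.range ((l ^ m : ℕ) • (AddMonoidHom.id A)))) =
      Nat.card (AddMonoidHom.ker ((l ^ m : ℕ) • (AddMonoidHom.id A))) :=
  stmt4_general l m π hsurj hdiv hfin
end

section
/- Let X be a finitely generated module over Λ = Z_p[[T]] that is pseudo-isomorphic to Λ^ρ ⊕ ⊕_s Λ/f_s^{l_s}Λ ⊕ ⊕_t Λ/p^{m_t}Λ, where each f_s is a distinguished (monic, ≡ T^{deg f_s} mod p) polynomial. Then for all m, n ≥ 0, #(X/(p^m, (T+1)^{p^n} − 1)X) equals p^{(ρ m + Σ_t min(m_t, m)) p^n} up to a multiplicative constant depending only on X and m (independent of n). -/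
/-!
Write `ω_n = (1 + T) ^ (p ^ n) - 1` and `I = (p ^ m, ω_n)`. By Weierstrass division, for a
distinguished polynomial `g` the ring `Λ ⧸ (g)` is free of rank `deg g` over `ℤ_p`, so
`Λ ⧸ (p ^ k, g)` has `p ^ (k deg g)` elements. Since `ω_n` is distinguished of degree `p ^ n`,
the elementary module `E = Λ^ρ ⊕ ⊕ Λ ⧸ (f_s ^ l_s) ⊕ ⊕ Λ ⧸ (p ^ m_t)` has
`#(E ⧸ I E) = p ^ ((ρ m + ∑ min(m_t, m)) p ^ n) · ∏_s #(Λ ⧸ (f_s ^ l_s, p ^ m, ω_n))`, and each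
factor of the product lies between `1` and `p ^ (m l_s deg f_s)`, independently of `n`.
Finally, a map `φ : X → E` with finite kernel and cokernel changes `#(· ⧸ I ·)` by at most the
factor `#ker φ · #coker φ ^ 2`, the exponent being the number of generators of `I`.
-/

open Polynomial TensorProduct

section QuotientSMulTop

variable {R : Type*} [CommRing R] (I : Ideal R)
  {M N : Type*} [AddCommGroup M] [Module R M] [AddCommGroup N] [Module R N]

variable (M) in
theorem card_quotient_smul_top_eq_card_tensor :
    Nat.card (M ⧸ I • (⊤ : Submodule R M)) = Nat.card ((R ⧸ I) ⊗[R] M) :=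
  Nat.card_congr (quotTensorEquivQuotSMul M I).toEquiv.symm

theorem LinearEquiv.card_quotient_smul_top_eq (e : M ≃ₗ[R] N) :
    Nat.card (M ⧸ I • (⊤ : Submodule R M)) = Nat.card (N ⧸ I • (⊤ : Submodule R N)) := by
  simp only [card_quotient_smul_top_eq_card_tensor]
  exact Nat.card_congr (e.lTensor _).toEquiv

theorem card_quotient_smul_top_prod :
    Nat.card ((M × N) ⧸ I • (⊤ : Submodule R (M × N))) =
      Nat.card (M ⧸ I • (⊤ : Submodule R M)) * Nat.card (N ⧸ I • (⊤ : Submodule R N)) := by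
  simp only [card_quotient_smul_top_eq_card_tensor]
  rw [Nat.card_congr (prodRight R R (R ⧸ I) M N).toEquiv, Nat.card_prod]

theorem card_quotient_smul_top_pi {ι : Type*} [Fintype ι] (Ms : ι → Type*)
    [∀ i, AddCommGroup (Ms i)] [∀ i, Module R (Ms i)] :
    Nat.card ((Π i, Ms i) ⧸ I • (⊤ : Submodule R (Π i, Ms i))) =
      ∏ i, Nat.card (Ms i ⧸ I • (⊤ : Submodule R (Ms i))) := by
  classical
  simp only [card_quotient_smul_top_eq_card_tensor]
  rw [Nat.card_congr (piRight R R (R ⧸ I) Ms).toEquiv, Nat.card_pi]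

theorem card_quotient_smul_top_algebra (S : Type*) [CommRing S] [Algebra R S] :
    Nat.card (S ⧸ I • (⊤ : Submodule R S)) = Nat.card (S ⧸ I.map (algebraMap R S)) := by
  rw [Ideal.smul_top_eq_map]
  exact Nat.card_congr (Submodule.Quotient.restrictScalarsEquiv R _).toEquiv

theorem card_quotient_smul_top_self :
    Nat.card (R ⧸ I • (⊤ : Submodule R R)) = Nat.card (R ⧸ I) := by
  rw [card_quotient_smul_top_algebra, Algebra.algebraMap_self, Ideal.map_id]

theorem card_quotient_smul_top_quotient (J : Ideal R) :
    Nat.card ((R ⧸ J) ⧸ I • (⊤ : Submodule R (R ⧸ J))) = Nat.card (R ⧸ (J ⊔ I)) := by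
  rw [card_quotient_smul_top_algebra, Ideal.Quotient.algebraMap_eq]
  exact Nat.card_congr (DoubleQuot.quotQuotEquivQuotSup J I).toEquiv

theorem Module.Basis.card_quotient_smul_top {ι : Type*} [Fintype ι] (b : Module.Basis ι R M) :
    Nat.card (M ⧸ I • (⊤ : Submodule R M)) = Nat.card (R ⧸ I) ^ Fintype.card ι := by
  rw [b.equivFun.card_quotient_smul_top_eq, card_quotient_smul_top_pi, Finset.prod_const,
    card_quotient_smul_top_self, Finset.card_univ]

theorem finite_quotient_smul_top [Module.Finite R M] [Finite (R ⧸ I)] :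
    Finite (M ⧸ I • (⊤ : Submodule R M)) :=
  have := Module.finite_of_finite (R ⧸ I) (M := (R ⧸ I) ⊗[R] M)
  .of_equiv _ (quotTensorEquivQuotSMul M I).toEquiv

end QuotientSMulTop

section PseudoIsomorphism

variable {R : Type*} [CommRing R] (I : Ideal R)
  {M N : Type*} [AddCommGroup M] [Module R M] [AddCommGroup N] [Module R N]

theorem Submodule.mapQ_surjective {p : Submodule R M} {q : Submodule R N} {f : M →ₗ[R] N}
    (h : p ≤ q.comap f) (hf : Function.Surjective f) : Function.Surjective (p.mapQ q f h) := by
  intro y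
  obtain ⟨y, rfl⟩ := q.mkQ_surjective y
  obtain ⟨x, rfl⟩ := hf y
  exact ⟨p.mkQ x, rfl⟩

theorem Submodule.exists_sum_eq_of_mem_span_smul_top {s : Finset R} {x : M}
    (hx : x ∈ Ideal.span (s : Set R) • (⊤ : Submodule R M)) :
    ∃ w : s → M, ∑ i : s, i.1 • w i = x := by
  refine Submodule.smul_induction_on hx (fun r hr m _ => ?_) fun x y ⟨wx, hx⟩ ⟨wy, hy⟩ => ?_
  · obtain ⟨c, rfl⟩ := Submodule.mem_span_finset'.mp hr
    exact ⟨fun i => c i • m, by simp [Finset.sum_smul, smul_smul, mul_comm]⟩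
  · refine ⟨wx + wy, ?_⟩
    simp only [Pi.add_apply, smul_add, Finset.sum_add_distrib, hx, hy]

theorem card_quotient_smul_top_le_of_finite_coker (φ : M →ₗ[R] N)
    [Finite (N ⧸ LinearMap.range φ)] [Finite (M ⧸ I • (⊤ : Submodule R M))] :
    Nat.card (N ⧸ I • (⊤ : Submodule R N)) ≤
      Nat.card (N ⧸ LinearMap.range φ) * Nat.card (M ⧸ I • (⊤ : Submodule R M)) := by
  set g := Submodule.mapQ _ _ φ (Submodule.smul_top_le_comap_smul_top I φ)
  have hle : LinearMap.range φ ≤ (LinearMap.range g).comap (I • ⊤ : Submodule R N).mkQ := by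
    rintro _ ⟨x, rfl⟩
    exact ⟨Submodule.Quotient.mk x, rfl⟩
  rw [AddSubgroup.card_eq_card_quotient_mul_card_addSubgroup (LinearMap.range g).toAddSubgroup]
  gcongr
  · exact Nat.card_le_card_of_surjective _
      (Submodule.mapQ_surjective hle (Submodule.mkQ_surjective _))
  · exact Nat.card_le_card_of_surjective _ g.surjective_rangeRestrict

theorem card_quotient_smul_top_le_of_surjective {f : M →ₗ[R] N} (hf : Function.Surjective f)
    [Finite (LinearMap.ker f)] :
    Nat.card (M ⧸ I • (⊤ : Submodule R M)) ≤
      Nat.card (LinearMap.ker f) * Nat.card (N ⧸ I • (⊤ : Submodule R N)) := by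
  set g := Submodule.mapQ _ _ f (Submodule.smul_top_le_comap_smul_top I f)
  have hker : LinearMap.ker g = (LinearMap.ker f).map (I • ⊤ : Submodule R M).mkQ := by
    rw [Submodule.ker_mapQ, Submodule.comap_smul_top_of_surjective I f hf, Submodule.map_sup,
      Submodule.mkQ_map_self, bot_sup_eq]
  rw [AddSubgroup.card_eq_card_quotient_mul_card_addSubgroup (LinearMap.ker g).toAddSubgroup,
    mul_comm]
  gcongr
  · rw [hker]
    exact Nat.card_le_card_of_surjective _ (LinearMap.submoduleMap_surjective _ _)
  · exact (Nat.card_congr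
      (g.quotKerEquivOfSurjective (Submodule.mapQ_surjective _ hf)).toEquiv).le

theorem card_ker_mapQ_subtype_le (s : Finset R) (P : Submodule R M) [Finite (M ⧸ P)] :
    Nat.card (LinearMap.ker (Submodule.mapQ _ _ P.subtype
      (Submodule.smul_top_le_comap_smul_top (Ideal.span (s : Set R)) P.subtype))) ≤
      Nat.card (M ⧸ P) ^ s.card := by
  set I := Ideal.span (s : Set R)
  set K := LinearMap.ker
    (Submodule.mapQ _ _ P.subtype (Submodule.smul_top_le_comap_smul_top I P.subtype))
  have hle : I • ⊤ ≤ (I • P).comap P.subtype := fun x hx => (Submodule.mem_smul_top_iff I P x).mp hx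
  set ψ := Submodule.mapQ _ _ P.subtype hle
  have hψ : Function.Injective ψ := by
    rw [← LinearMap.ker_eq_bot, Submodule.ker_mapQ, eq_bot_iff]
    rintro _ ⟨x, hx, rfl⟩
    exact (Submodule.Quotient.mk_eq_zero _).mpr ((Submodule.mem_smul_top_iff I P x).mpr hx)
  -- `ψ` embeds the kernel `(P ⊓ I • ⊤) ⧸ I • P` into `(I • ⊤) ⧸ I • P`, which is the image of
  -- `s → M ⧸ P` under `v ↦ ∑ i • v i`; `σ` computes that map through representatives.
  let σ : (s → M ⧸ P) → M ⧸ (I • P) := fun v => Submodule.Quotient.mk (∑ i : s, i.1 • (v i).out)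
  have himage : ψ '' (K : Set _) ⊆ Set.range σ := by
    rintro _ ⟨y, hy, rfl⟩
    obtain ⟨x, rfl⟩ := Submodule.mkQ_surjective _ y
    have hx : (x : M) ∈ I • (⊤ : Submodule R M) := by
      simpa [K, Submodule.Quotient.mk_eq_zero] using hy
    obtain ⟨w, hw⟩ := Submodule.exists_sum_eq_of_mem_span_smul_top hx
    refine ⟨fun i => Submodule.Quotient.mk (w i), ?_⟩
    simp only [σ, ψ, Submodule.mkQ_apply, Submodule.mapQ_apply, Submodule.subtype_apply, ← hw,
      Submodule.Quotient.eq, ← Finset.sum_sub_distrib, ← smul_sub]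
    exact Submodule.sum_mem _ fun i _ => Submodule.smul_mem_smul (Ideal.subset_span i.2)
      ((Submodule.Quotient.eq _).mp (Quotient.out_eq _))
  calc Nat.card K = Nat.card (ψ '' (K : Set _)) := (Nat.card_image_of_injective hψ _).symm
    _ ≤ Nat.card (Set.range σ) := Nat.card_mono (Set.finite_range σ) himage
    _ ≤ Nat.card (s → M ⧸ P) := Finite.card_range_le σ
    _ = Nat.card (M ⧸ P) ^ s.card := by simp [Nat.card_fun]

theorem card_submodule_quotient_smul_top_le (s : Finset R) (P : Submodule R M) [Finite (M ⧸ P)]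
    [Finite (M ⧸ Ideal.span (s : Set R) • (⊤ : Submodule R M))] :
    Nat.card (P ⧸ Ideal.span (s : Set R) • (⊤ : Submodule R P)) ≤
      Nat.card (M ⧸ P) ^ s.card * Nat.card (M ⧸ Ideal.span (s : Set R) • (⊤ : Submodule R M)) := by
  set g := Submodule.mapQ _ _ P.subtype
    (Submodule.smul_top_le_comap_smul_top (Ideal.span (s : Set R)) P.subtype)
  rw [AddSubgroup.card_eq_card_quotient_mul_card_addSubgroup (LinearMap.ker g).toAddSubgroup,
    mul_comm]
  gcongr
  · exact card_ker_mapQ_subtype_le s P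
  · exact (Nat.card_congr g.quotKerEquivRange.toEquiv).trans_le
      (Nat.card_le_card_of_injective _ Subtype.val_injective)

theorem card_quotient_smul_top_le_of_finite_ker_coker (φ : M →ₗ[R] N)
    [Finite (LinearMap.ker φ)] [Finite (N ⧸ LinearMap.range φ)] (s : Finset R)
    [Finite (N ⧸ Ideal.span (s : Set R) • (⊤ : Submodule R N))] :
    Nat.card (M ⧸ Ideal.span (s : Set R) • (⊤ : Submodule R M)) ≤
      Nat.card (LinearMap.ker φ) * Nat.card (N ⧸ LinearMap.range φ) ^ s.card *
        Nat.card (N ⧸ Ideal.span (s : Set R) • (⊤ : Submodule R N)) := by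
  have : Finite (LinearMap.ker φ.rangeRestrict) := by rwa [LinearMap.ker_rangeRestrict]
  calc _ ≤ Nat.card (LinearMap.ker φ.rangeRestrict) *
        Nat.card (LinearMap.range φ ⧸ Ideal.span (s : Set R) • (⊤ : Submodule R _)) :=
        card_quotient_smul_top_le_of_surjective _ φ.surjective_rangeRestrict
    _ ≤ _ := by
      rw [LinearMap.ker_rangeRestrict, mul_assoc]
      gcongr
      exact card_submodule_quotient_smul_top_le s _

theorem exists_card_quotient_span_pair_smul_top_le (φ : M →ₗ[R] N)
    [Finite (LinearMap.ker φ)] [Finite (N ⧸ LinearMap.range φ)] :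
    ∃ K : ℕ, 0 < K ∧ ∀ a b : R,
      Finite (M ⧸ Ideal.span {a, b} • (⊤ : Submodule R M)) →
      Finite (N ⧸ Ideal.span {a, b} • (⊤ : Submodule R N)) →
      Nat.card (N ⧸ Ideal.span {a, b} • (⊤ : Submodule R N)) ≤
          K * Nat.card (M ⧸ Ideal.span {a, b} • (⊤ : Submodule R M)) ∧
        Nat.card (M ⧸ Ideal.span {a, b} • (⊤ : Submodule R M)) ≤
          K * Nat.card (N ⧸ Ideal.span {a, b} • (⊤ : Submodule R N)) := by
  classical
  have hker : 0 < Nat.card (LinearMap.ker φ) := Nat.card_pos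
  have hcoker : 0 < Nat.card (N ⧸ LinearMap.range φ) := Nat.card_pos
  refine ⟨Nat.card (LinearMap.ker φ) * Nat.card (N ⧸ LinearMap.range φ) ^ 2, by positivity,
    fun a b hM hN => ⟨?_, ?_⟩⟩
  · refine (card_quotient_smul_top_le_of_finite_coker _ φ).trans (Nat.mul_le_mul_right _ ?_)
    calc Nat.card (N ⧸ LinearMap.range φ) ≤ Nat.card (N ⧸ LinearMap.range φ) ^ 2 :=
          Nat.le_self_pow two_ne_zero _
      _ ≤ _ := Nat.le_mul_of_pos_left _ hker
  · have hpair : Ideal.span {a, b} = Ideal.span ((({a, b} : Finset R)) : Set R) := by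
      rw [Finset.coe_pair]
    rw [hpair] at hM hN ⊢
    refine (card_quotient_smul_top_le_of_finite_ker_coker φ _).trans (Nat.mul_le_mul_right _ ?_)
    exact Nat.mul_le_mul_left _ (Nat.pow_le_pow_right hcoker (Finset.card_le_two))

end PseudoIsomorphism

namespace Polynomial.IsDistinguishedAt

variable {A : Type*} [CommRing A] {I : Ideal A}

theorem one : (1 : A[X]).IsDistinguishedAt I :=
  ⟨⟨fun h => absurd h (by simp)⟩, monic_one⟩

theorem pow {f : A[X]} (hf : f.IsDistinguishedAt I) (n : ℕ) : (f ^ n).IsDistinguishedAt I := by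
  induction n with
  | zero => simpa using one
  | succ n ih => simpa [pow_succ] using ih.mul hf

theorem _root_.Polynomial.natDegree_X_add_one_pow_sub_one [Nontrivial A] {N : ℕ} (hN : 0 < N) :
    ((X + 1) ^ N - 1 : A[X]).natDegree = N := by
  have h : ((X + 1) ^ N : A[X]).natDegree = N := by rw [← C_1, natDegree_pow_X_add_C]
  rw [natDegree_sub_eq_left_of_natDegree_lt] <;> simp [h, hN]

theorem X_add_one_pow_sub_one [Nontrivial A] {p : ℕ} (hp : p.Prime) (hpI : (p : A) ∈ I) (n : ℕ) :
    ((X + 1) ^ (p ^ n) - 1 : A[X]).IsDistinguishedAt I := by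
  have hpn := pow_pos hp.pos n
  refine ⟨⟨fun {i} hi => ?_⟩, ?_⟩
  · rw [natDegree_X_add_one_pow_sub_one hpn] at hi
    rw [coeff_sub, coeff_X_add_one_pow, coeff_one]
    rcases Nat.eq_zero_or_pos i with rfl | hi0
    · simp
    · obtain ⟨c, hc⟩ := hp.dvd_choose_pow hi0.ne' hi.ne
      rw [if_neg hi0.ne', sub_zero, hc, Nat.cast_mul]
      exact I.mul_mem_right _ hpI
  · refine ((monic_X_add_C 1).pow _).sub_of_left (degree_lt_degree ?_)
    rw [natDegree_one, natDegree_pow_X_add_C]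
    exact hpn

end Polynomial.IsDistinguishedAt

theorem PowerSeries.card_quotient_span_sup_map_C {A : Type*} [CommRing A] {I : Ideal A}
    [IsAdicComplete I A] {g : A[X]} (hg : g.IsDistinguishedAt I) (J : Ideal A) :
    Nat.card (PowerSeries A ⧸ (Ideal.span {(g : PowerSeries A)} ⊔ J.map PowerSeries.C)) =
      Nat.card (A ⧸ J) ^ g.natDegree := by
  set B := PowerSeries A ⧸ Ideal.span {(g : PowerSeries A)}
  have b : Module.Basis (Fin g.natDegree) A B :=
    ((AdjoinRoot.powerBasis' hg.monic).basis.map hg.algEquivQuotient.toLinearEquiv).reindex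
      (finCongr (AdjoinRoot.powerBasis'_dim hg.monic))
  have hmap : (J.map PowerSeries.C).map (Ideal.Quotient.mk _) = J.map (algebraMap A B) := by
    rw [Ideal.map_map, IsScalarTower.algebraMap_eq A (PowerSeries A) B,
      Ideal.Quotient.algebraMap_eq, PowerSeries.algebraMap_eq]
  rw [← Nat.card_congr (DoubleQuot.quotQuotEquivQuotSup _ _).toEquiv, hmap,
    ← card_quotient_smul_top_algebra, b.card_quotient_smul_top, Fintype.card_fin]

theorem PadicInt.card_quotient_span_pow {p : ℕ} [Fact p.Prime] (k : ℕ) :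
    Nat.card (ℤ_[p] ⧸ Ideal.span {(p : ℤ_[p]) ^ k}) = p ^ k := by
  rw [← PadicInt.ker_toZModPow, Nat.card_congr
    (RingHom.quotientKerEquivOfSurjective (ZMod.ringHom_surjective _)).toEquiv, Nat.card_zmod]

theorem Ideal.span_singleton_pow_sup_span_singleton_pow {R : Type*} [CommRing R] (x : R)
    (a b : ℕ) : Ideal.span {x ^ a} ⊔ Ideal.span {x ^ b} = Ideal.span {x ^ min a b} := by
  rcases le_total a b with h | h
  · rw [min_eq_left h, sup_eq_left]
    exact Ideal.span_singleton_le_span_singleton.mpr (pow_dvd_pow x h)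
  · rw [min_eq_right h, sup_eq_right]
    exact Ideal.span_singleton_le_span_singleton.mpr (pow_dvd_pow x h)

section Iwasawa

variable (p : ℕ) [Fact p.Prime]

local notation "Λ" => PowerSeries ℤ_[p]

noncomputable abbrev iwasawaIdeal (m n : ℕ) : Ideal Λ :=
  Ideal.span {(p : Λ) ^ m, (PowerSeries.X + 1) ^ (p ^ n) - 1}

abbrev ElementaryModule (ρ : ℕ) {S T : ℕ} (f : Fin S → ℤ_[p][X]) (ls : Fin S → ℕ)
    (mt : Fin T → ℕ) : Type _ :=
  (Fin ρ → Λ) × (Π s, Λ ⧸ Ideal.span {(f s : Λ) ^ ls s}) × (Π t, Λ ⧸ Ideal.span {(p : Λ) ^ mt t})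

variable {p}

theorem isDistinguishedAt_X_add_one_pow_sub_one (n : ℕ) :
    ((X + 1) ^ (p ^ n) - 1 : ℤ_[p][X]).IsDistinguishedAt (IsLocalRing.maximalIdeal ℤ_[p]) :=
  .X_add_one_pow_sub_one Fact.out
    (by rw [PadicInt.maximalIdeal_eq_span_p]; exact Ideal.mem_span_singleton_self _) n

theorem iwasawaIdeal_eq (m n : ℕ) :
    iwasawaIdeal p m n =
      Ideal.span {(((X + 1) ^ (p ^ n) - 1 : ℤ_[p][X]) : Λ)} ⊔ Ideal.span {(p : Λ) ^ m} := by
  unfold iwasawaIdeal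
  rw [Ideal.span_insert, sup_comm]
  simp

theorem card_quotient_span_sup_span_pow {g : ℤ_[p][X]}
    (hg : g.IsDistinguishedAt (IsLocalRing.maximalIdeal ℤ_[p])) (k : ℕ) :
    Nat.card (Λ ⧸ (Ideal.span {(g : Λ)} ⊔ Ideal.span {(p : Λ) ^ k})) = p ^ (k * g.natDegree) := by
  have : Ideal.span {(p : Λ) ^ k} = (Ideal.span {(p : ℤ_[p]) ^ k}).map PowerSeries.C := by
    rw [Ideal.map_span, Set.image_singleton, map_pow, map_natCast]
  rw [this, PowerSeries.card_quotient_span_sup_map_C hg, PadicInt.card_quotient_span_pow, ← pow_mul]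

theorem card_quotient_span_pow_sup_iwasawaIdeal (k m n : ℕ) :
    Nat.card (Λ ⧸ (Ideal.span {(p : Λ) ^ k} ⊔ iwasawaIdeal p m n)) = p ^ (min k m * p ^ n) := by
  rw [iwasawaIdeal_eq, sup_left_comm, Ideal.span_singleton_pow_sup_span_singleton_pow,
    card_quotient_span_sup_span_pow (isDistinguishedAt_X_add_one_pow_sub_one n),
    natDegree_X_add_one_pow_sub_one (pow_pos (Fact.out : p.Prime).pos n)]

theorem card_quotient_iwasawaIdeal (m n : ℕ) :
    Nat.card (Λ ⧸ iwasawaIdeal p m n) = p ^ (m * p ^ n) := by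
  have := card_quotient_span_pow_sup_iwasawaIdeal (p := p) m m n
  rwa [sup_eq_right.mpr (iwasawaIdeal_eq (p := p) m n ▸ le_sup_right), min_self] at this

instance finite_quotient_iwasawaIdeal (m n : ℕ) : Finite (Λ ⧸ iwasawaIdeal p m n) :=
  Nat.finite_of_card_ne_zero (by
    rw [card_quotient_iwasawaIdeal]; exact (pow_pos (Fact.out : p.Prime).pos _).ne')

theorem card_quotient_span_sup_iwasawaIdeal_le {g : ℤ_[p][X]}
    (hg : g.IsDistinguishedAt (IsLocalRing.maximalIdeal ℤ_[p])) (m n : ℕ) :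
    Finite (Λ ⧸ (Ideal.span {(g : Λ)} ⊔ iwasawaIdeal p m n)) ∧
      Nat.card (Λ ⧸ (Ideal.span {(g : Λ)} ⊔ iwasawaIdeal p m n)) ≤ p ^ (m * g.natDegree) := by
  have hle : Ideal.span {(g : Λ)} ⊔ Ideal.span {(p : Λ) ^ m} ≤
      Ideal.span {(g : Λ)} ⊔ iwasawaIdeal p m n :=
    sup_le_sup_left (iwasawaIdeal_eq (p := p) m n ▸ le_sup_right) _
  have hcard := card_quotient_span_sup_span_pow hg m
  have : Finite (Λ ⧸ (Ideal.span {(g : Λ)} ⊔ Ideal.span {(p : Λ) ^ m})) :=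
    Nat.finite_of_card_ne_zero (by rw [hcard]; exact (pow_pos (Fact.out : p.Prime).pos _).ne')
  exact ⟨.of_surjective _ (Ideal.Quotient.factor_surjective hle),
    hcard ▸ Nat.card_le_card_of_surjective _ (Ideal.Quotient.factor_surjective hle)⟩

section ElementaryModule

variable (ρ : ℕ) {S T : ℕ} (f : Fin S → ℤ_[p][X]) (ls : Fin S → ℕ) (mt : Fin T → ℕ)

local notation "E" => ElementaryModule p ρ f ls mt

theorem card_quotient_elementaryModule (m n : ℕ) :
    Nat.card (E ⧸ iwasawaIdeal p m n • (⊤ : Submodule Λ E)) =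
      p ^ ((ρ * m + ∑ t, min (mt t) m) * p ^ n) *
        ∏ s, Nat.card (Λ ⧸ (Ideal.span {(f s : Λ) ^ ls s} ⊔ iwasawaIdeal p m n)) := by
  simp only [card_quotient_smul_top_prod, card_quotient_smul_top_pi, card_quotient_smul_top_self,
    card_quotient_smul_top_quotient, card_quotient_iwasawaIdeal,
    card_quotient_span_pow_sup_iwasawaIdeal, Finset.prod_const, Finset.card_univ,
    Fintype.card_fin, Finset.prod_pow_eq_pow_sum]
  rw [← pow_mul, ← Finset.sum_mul]
  ring

variable {f} in
theorem exists_card_quotient_elementaryModule_le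
    (hf : ∀ s, (f s).IsDistinguishedAt (IsLocalRing.maximalIdeal ℤ_[p])) (m : ℕ) :
    ∃ C : ℕ, 0 < C ∧ ∀ n, Finite (E ⧸ iwasawaIdeal p m n • (⊤ : Submodule Λ E)) ∧
      p ^ ((ρ * m + ∑ t, min (mt t) m) * p ^ n) ≤
        Nat.card (E ⧸ iwasawaIdeal p m n • (⊤ : Submodule Λ E)) ∧
      Nat.card (E ⧸ iwasawaIdeal p m n • (⊤ : Submodule Λ E)) ≤
        C * p ^ ((ρ * m + ∑ t, min (mt t) m) * p ^ n) := by
  have hp := (Fact.out : p.Prime).pos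
  refine ⟨∏ s, p ^ (m * (f s ^ ls s).natDegree), by positivity, fun n => ?_⟩
  have hfactor s := card_quotient_span_sup_iwasawaIdeal_le ((hf s).pow (ls s)) m n
  simp only [coe_pow] at hfactor
  have hpos : 0 < ∏ s, Nat.card (Λ ⧸ (Ideal.span {(f s : Λ) ^ ls s} ⊔ iwasawaIdeal p m n)) :=
    Finset.prod_pos fun s _ => have := (hfactor s).1; Nat.card_pos
  rw [card_quotient_elementaryModule]
  refine ⟨Nat.finite_of_card_ne_zero ?_, Nat.le_mul_of_pos_right _ hpos, ?_⟩
  · rw [card_quotient_elementaryModule]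
    positivity
  · rw [mul_comm]
    exact Nat.mul_le_mul_right _ (Finset.prod_le_prod' fun s _ => (hfactor s).2)

end ElementaryModule

end Iwasawa

theorem stmt14_general (p : ℕ) [Fact p.Prime] (M : Type*) [AddCommGroup M]
    [Module (PowerSeries ℤ_[p]) M] [Module.Finite (PowerSeries ℤ_[p]) M]
    (ρ S T : ℕ) (f : Fin S → Polynomial ℤ_[p]) (hf : ∀ s, (f s).Monic)
    (hdist : ∀ s, ∀ i < (f s).natDegree, (p : ℤ_[p]) ∣ (f s).coeff i)
    (ls : Fin S → ℕ) (mt : Fin T → ℕ)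
    (φ : M →ₗ[PowerSeries ℤ_[p]]
      ((Fin ρ → PowerSeries ℤ_[p]) ×
       (Π s : Fin S, PowerSeries ℤ_[p] ⧸
          Ideal.span {((f s : PowerSeries ℤ_[p])) ^ ls s}) ×
       (Π t : Fin T, PowerSeries ℤ_[p] ⧸
          Ideal.span {(p : PowerSeries ℤ_[p]) ^ mt t})))
    (hker : Finite (LinearMap.ker φ))
    (hcoker : Finite ((((Fin ρ → PowerSeries ℤ_[p]) ×
       (Π s : Fin S, PowerSeries ℤ_[p] ⧸
          Ideal.span {((f s : PowerSeries ℤ_[p])) ^ ls s}) ×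
       (Π t : Fin T, PowerSeries ℤ_[p] ⧸
          Ideal.span {(p : PowerSeries ℤ_[p]) ^ mt t}))) ⧸ LinearMap.range φ))
    (m : ℕ) :
    ∃ c₁ c₂ : ℝ, 0 < c₁ ∧ 0 < c₂ ∧ ∀ n : ℕ,
      c₁ * (p : ℝ) ^ ((ρ * m + ∑ t, min (mt t) m) * p ^ n) ≤
        (Nat.card (M ⧸ (Ideal.span {(p : PowerSeries ℤ_[p]) ^ m,
            ((PowerSeries.X + 1) ^ (p ^ n) - 1 : PowerSeries ℤ_[p])} •
          (⊤ : Submodule (PowerSeries ℤ_[p]) M))) : ℝ) ∧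
      (Nat.card (M ⧸ (Ideal.span {(p : PowerSeries ℤ_[p]) ^ m,
            ((PowerSeries.X + 1) ^ (p ^ n) - 1 : PowerSeries ℤ_[p])} •
          (⊤ : Submodule (PowerSeries ℤ_[p]) M))) : ℝ) ≤
        c₂ * (p : ℝ) ^ ((ρ * m + ∑ t, min (mt t) m) * p ^ n) := by
  have hdistinguished s : (f s).IsDistinguishedAt (IsLocalRing.maximalIdeal ℤ_[p]) :=
    ⟨⟨fun hi => by
      rw [PadicInt.maximalIdeal_eq_span_p, Ideal.mem_span_singleton]; exact hdist s _ hi⟩, hf s⟩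
  obtain ⟨C, hC, hE⟩ := exists_card_quotient_elementaryModule_le ρ ls mt hdistinguished m
  obtain ⟨K, hK, hφ⟩ := exists_card_quotient_span_pair_smul_top_le φ
  refine ⟨1 / K, K * C, by positivity, by positivity, fun n => ?_⟩
  obtain ⟨hfin, hlow, hupp⟩ := hE n
  obtain ⟨h₁, h₂⟩ := hφ _ _ (finite_quotient_smul_top (iwasawaIdeal p m n)) hfin
  constructor
  · rw [div_mul_eq_mul_div, one_mul, div_le_iff₀ (by positivity)]
    exact_mod_cast (hlow.trans h₁).trans_eq (mul_comm _ _)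
  · calc _ ≤ (K * (C * p ^ ((ρ * m + ∑ t, min (mt t) m) * p ^ n) : ℕ) : ℝ) := by
          exact_mod_cast h₂.trans (Nat.mul_le_mul_left _ hupp)
      _ = _ := by push_cast; ring

/-- Let `M` be a finitely generated module over `Λ = ℤ_p[[T]]`
pseudo-isomorphic to `Λ^ρ ⊕ ⊕_s Λ/f_s^{l_s}Λ ⊕ ⊕_t Λ/p^{m_t}Λ` with each `f_s`
distinguished.  Then for all `m, n ≥ 0`, `#(M/(p^m, (T+1)^{p^n} − 1)M)` equals
`p^{(ρ m + Σ_t min(m_t, m)) p^n}` up to a multiplicative constant depending only on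
`M` and `m` (independent of `n`). -/
theorem stmt14 (p : ℕ) [Fact p.Prime] (M : Type*) [AddCommGroup M]
    [Module (PowerSeries ℤ_[p]) M] [Module.Finite (PowerSeries ℤ_[p]) M]
    (ρ S T : ℕ) (f : Fin S → Polynomial ℤ_[p]) (hf : ∀ s, (f s).Monic)
    (hdist : ∀ s, ∀ i < (f s).natDegree, (p : ℤ_[p]) ∣ (f s).coeff i)
    (ls : Fin S → ℕ) (hls : ∀ s, 0 < ls s) (mt : Fin T → ℕ) (hmt : ∀ t, 0 < mt t)
    (φ : M →ₗ[PowerSeries ℤ_[p]]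
      ((Fin ρ → PowerSeries ℤ_[p]) ×
       (Π s : Fin S, PowerSeries ℤ_[p] ⧸
          Ideal.span {((f s : PowerSeries ℤ_[p])) ^ ls s}) ×
       (Π t : Fin T, PowerSeries ℤ_[p] ⧸
          Ideal.span {(p : PowerSeries ℤ_[p]) ^ mt t})))
    (hker : Finite (LinearMap.ker φ))
    (hcoker : Finite ((((Fin ρ → PowerSeries ℤ_[p]) ×
       (Π s : Fin S, PowerSeries ℤ_[p] ⧸
          Ideal.span {((f s : PowerSeries ℤ_[p])) ^ ls s}) ×
       (Π t : Fin T, PowerSeries ℤ_[p] ⧸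
          Ideal.span {(p : PowerSeries ℤ_[p]) ^ mt t}))) ⧸ LinearMap.range φ))
    (m : ℕ) :
    ∃ c₁ c₂ : ℝ, 0 < c₁ ∧ 0 < c₂ ∧ ∀ n : ℕ,
      c₁ * (p : ℝ) ^ ((ρ * m + ∑ t, min (mt t) m) * p ^ n) ≤
        (Nat.card (M ⧸ (Ideal.span {(p : PowerSeries ℤ_[p]) ^ m,
            ((PowerSeries.X + 1) ^ (p ^ n) - 1 : PowerSeries ℤ_[p])} •
          (⊤ : Submodule (PowerSeries ℤ_[p]) M))) : ℝ) ∧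
      (Nat.card (M ⧸ (Ideal.span {(p : PowerSeries ℤ_[p]) ^ m,
            ((PowerSeries.X + 1) ^ (p ^ n) - 1 : PowerSeries ℤ_[p])} •
          (⊤ : Submodule (PowerSeries ℤ_[p]) M))) : ℝ) ≤
        c₂ * (p : ℝ) ^ ((ρ * m + ∑ t, min (mt t) m) * p ^ n) :=
  stmt14_general p M ρ S T f hf hdist ls mt φ hker hcoker m
end
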